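/- Let G be a 3-γc-critical graph with a cut vertex. Then α(G) = κ(G) + 2. -/

import Mathlib

open SimpleGraph Finset

variable {V : Type*}

/-- The graph `G` with the extra edge `uv` added. -/
def SimpleGraph.addEdge (G : SimpleGraph V) (u v : V) : SimpleGraph V :=
  G ⊔ SimpleGraph.fromEdgeSet {s(u, v)}

/-- `D` is a connected dominating set of `G`. -/
def SimpleGraph.IsCDS (G : SimpleGraph V) (D : Set V) : Prop :=
  (∀ v : V, v ∈ D ∨ ∃ u ∈ D, G.Adj u v) ∧ (G.induce D).Connected

/-- The connected domination number. -/
noncomputable def SimpleGraph.cdn [Fintype V] (G : SimpleGraph V) : ℕ :=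
  sInf {n | ∃ D : Finset V, D.card = n ∧ G.IsCDS ↑D}

/-- `G` is a `3`-`γ_c`-critical graph. -/
def SimpleGraph.IsCritical3 [Fintype V] (G : SimpleGraph V) : Prop :=
  G.Connected ∧ G.cdn = 3 ∧
    ∀ u v : V, u ≠ v → ¬G.Adj u v → (G.addEdge u v).cdn < 3

/-- `s` is an independent set of `G`. -/
def SimpleGraph.IsIndepSet' (G : SimpleGraph V) (s : Set V) : Prop :=
  s.Pairwise (fun a b => ¬G.Adj a b)

/-- The independence number. -/
noncomputable def SimpleGraph.indepNum' [Fintype V] (G : SimpleGraph V) : ℕ :=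
  sSup {n | ∃ s : Finset V, G.IsIndepSet' ↑s ∧ s.card = n}

/-- `S` is a vertex cut: removing it leaves a non-connected graph. -/
def SimpleGraph.IsVertexCut [Fintype V] (G : SimpleGraph V) (S : Finset V) : Prop :=
  ¬(G.induce ((↑S : Set V)ᶜ)).Connected

/-- The vertex connectivity: minimum size of a vertex cut. -/
noncomputable def SimpleGraph.conn [Fintype V] (G : SimpleGraph V) : ℕ :=
  sInf {n | ∃ S : Finset V, S.card = n ∧ G.IsVertexCut S}

/-!
Let `a` be the cut vertex. If `u`, `v` are non-adjacent vertices of `G - a` and some component of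
`G - a` contains neither of them, a connected dominating set of `G + uv` with at most two vertices
must be `{u, a}` or `{v, a}`: exactly one of `u`, `v` is adjacent to `a`, and together with `a` it
dominates all but the other. As `G - a` is disconnected, this applies to every pair inside one
component. Among four independent vertices it then applies either to the three pairs of a triple,
whose adjacencies to `a` cannot pairwise differ, or to two disjoint pairs, where the first pair
forces both vertices of the second to be adjacent to `a`. For the lower bound, if no component of
`G - a` lies in the neighbourhood of `a` an independent triple through `a` is immediate; otherwise
an edge from `a` into the other component fails to dominate, and a missed vertex completes an
independent triple.
-/

namespace SimpleGraph

variable {G : SimpleGraph V} {a b u v w x y z : V}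

/-- `x` and `y` lie in the same component of `G - a`. -/
def ReachableAvoiding (G : SimpleGraph V) (a x y : V) : Prop :=
  ∃ p : G.Walk x y, a ∉ p.support

theorem ReachableAvoiding.refl (hx : x ≠ a) : G.ReachableAvoiding a x x :=
  ⟨.nil, by simpa using hx.symm⟩

theorem ReachableAvoiding.symm (h : G.ReachableAvoiding a x y) : G.ReachableAvoiding a y x :=
  let ⟨p, hp⟩ := h
  ⟨p.reverse, by simpa using hp⟩

theorem ReachableAvoiding.trans (h : G.ReachableAvoiding a x y) (h' : G.ReachableAvoiding a y z) :
    G.ReachableAvoiding a x z :=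
  let ⟨p, hp⟩ := h
  let ⟨q, hq⟩ := h'
  ⟨p.append q, by simp [Walk.mem_support_append_iff, hp, hq]⟩

theorem ReachableAvoiding.ne_left (h : G.ReachableAvoiding a x y) : x ≠ a :=
  let ⟨p, hp⟩ := h
  fun hx => hp (hx ▸ p.start_mem_support)

theorem ReachableAvoiding.ne_right (h : G.ReachableAvoiding a x y) : y ≠ a :=
  h.symm.ne_left

theorem ne_of_not_reachableAvoiding (hx : x ≠ a) (h : ¬G.ReachableAvoiding a x y) : x ≠ y :=
  fun hxy => h (hxy ▸ .refl hx)

theorem Adj.reachableAvoiding (hxy : G.Adj x y) (hx : x ≠ a) (hy : y ≠ a) :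
    G.ReachableAvoiding a x y :=
  ⟨hxy.toWalk, by simp [hx.symm, hy.symm]⟩

theorem not_adj_of_not_reachableAvoiding (hx : x ≠ a) (hy : y ≠ a)
    (h : ¬G.ReachableAvoiding a x y) : ¬G.Adj x y :=
  fun hxy => h (hxy.reachableAvoiding hx hy)

theorem ReachableAvoiding.induce (h : G.ReachableAvoiding a x y) :
    (G.induce {a}ᶜ).Reachable ⟨x, h.ne_left⟩ ⟨y, h.ne_right⟩ :=
  let ⟨p, hp⟩ := h
  ⟨p.induce {a}ᶜ fun _ hz hza => hp (hza ▸ hz)⟩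

theorem exists_not_reachableAvoiding [Fintype V] (ha : G.IsVertexCut {a}) (hb : b ≠ a) :
    ∃ u v, u ≠ a ∧ v ≠ a ∧ ¬G.ReachableAvoiding a u v := by
  by_contra! h
  apply ha
  rw [Finset.coe_singleton, connected_iff]
  exact ⟨fun x y => (h x y x.2 y.2).induce, ⟨⟨b, hb⟩⟩⟩

/-- Every component of `G - b` contains a neighbour of `b`. -/
theorem exists_adj_reachableAvoiding :
    ∀ {x : V} (_ : G.Walk x b), x ≠ b → ∃ w, G.Adj w b ∧ G.ReachableAvoiding b x w
  | _, .nil, hx => (hx rfl).elim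
  | x, .cons (v := y) hxy p, hx => by
    by_cases hy : y = b
    · subst hy
      exact ⟨x, hxy, .refl hx⟩
    · obtain ⟨w, hwb, hyw⟩ := exists_adj_reachableAvoiding p hy
      exact ⟨w, hwb, (hxy.reachableAvoiding hx hy).trans hyw⟩

def MissesComponent (G : SimpleGraph V) (a u v : V) : Prop :=
  ∃ t, t ≠ a ∧ ¬G.ReachableAvoiding a t u ∧ ¬G.ReachableAvoiding a t v

theorem ReachableAvoiding.missesComponent (hu : u ≠ a) (hv : v ≠ a)
    (huv : ¬G.ReachableAvoiding a u v) (h : G.ReachableAvoiding a x y) :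
    G.MissesComponent a x y := by
  by_cases hux : G.ReachableAvoiding a u x
  · exact ⟨v, hv, fun hvx => huv (hux.trans hvx.symm),
      fun hvy => huv (hux.trans (h.trans hvy.symm))⟩
  · exact ⟨u, hu, hux, fun huy => hux (huy.trans h.symm)⟩

theorem MissesComponent.symm (h : G.MissesComponent a u v) : G.MissesComponent a v u :=
  let ⟨t, hta, htu, htv⟩ := h
  ⟨t, hta, htv, htu⟩

theorem addEdge_adj : (G.addEdge u v).Adj x y ↔ G.Adj x y ∨ (s(x, y) = s(u, v) ∧ x ≠ y) := by
  simp [addEdge, fromEdgeSet_adj]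

theorem addEdge_comm : G.addEdge u v = G.addEdge v u := by
  rw [addEdge, Sym2.eq_swap, ← addEdge]

theorem Adj.of_addEdge (h : (G.addEdge u v).Adj x y) (hyu : y ≠ u) (hyv : y ≠ v) :
    G.Adj x y := by
  rcases addEdge_adj.1 h with h | ⟨h, -⟩
  · exact h
  · rcases Sym2.eq_iff.1 h with ⟨-, rfl⟩ | ⟨-, rfl⟩ <;> contradiction

theorem Connected.induce_univ (hG : G.Connected) : (G.induce Set.univ).Connected :=
  (induceUnivIso G).connected_iff.2 hG

theorem conn_eq_one_of_isVertexCut [Fintype V] (hG : G.Connected) (ha : G.IsVertexCut {a}) :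
    G.conn = 1 := by
  have h1 : 1 ∈ {n | ∃ S : Finset V, S.card = n ∧ G.IsVertexCut S} :=
    ⟨{a}, card_singleton a, ha⟩
  refine le_antisymm (Nat.sInf_le h1) (Nat.one_le_iff_ne_zero.2 fun h0 => ?_)
  rcases Nat.sInf_eq_zero.1 h0 with ⟨S, hS, hcut⟩ | hempty
  · rw [card_eq_zero.1 hS, IsVertexCut, coe_empty, Set.compl_empty] at hcut
    exact hcut hG.induce_univ
  · exact (Set.eq_empty_iff_forall_notMem.1 hempty) 1 h1

theorem isCDS_univ [Fintype V] (hG : G.Connected) : G.IsCDS ↑(univ : Finset V) :=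
  ⟨fun v => .inl (mem_univ v), coe_univ (α := V) ▸ hG.induce_univ⟩

theorem cdn_le_card [Fintype V] {D : Finset V} (hD : G.IsCDS ↑D) : G.cdn ≤ D.card :=
  Nat.sInf_le ⟨D, rfl, hD⟩

theorem exists_not_adj_of_two_lt_cdn [Fintype V] (hcdn : 2 < G.cdn) (hxy : G.Adj x y) :
    ∃ z, z ≠ x ∧ z ≠ y ∧ ¬G.Adj x z ∧ ¬G.Adj y z := by
  classical
  by_contra! h
  have hD : G.IsCDS ↑({x, y} : Finset V) := by
    refine ⟨fun z => ?_, by rw [coe_pair]; exact induce_pair_connected_of_adj hxy⟩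
    by_cases hzx : z = x
    · exact .inl (by simp [hzx])
    by_cases hzy : z = y
    · exact .inl (by simp [hzy])
    by_cases hxz : G.Adj x z
    · exact .inr ⟨x, by simp, hxz⟩
    · exact .inr ⟨y, by simp, h z hzx hzy hxz⟩
  have := cdn_le_card hD
  rw [card_pair hxy.ne] at this
  omega

theorem IsCDS.of_addEdge {D : Finset V} (hD : (G.addEdge u v).IsCDS ↑D) (hu : u ∉ D)
    (hv : v ∉ D) : G.IsCDS ↑D := by
  have hind : (G.addEdge u v).induce (↑D : Set V) = G.induce ↑D := by
    ext ⟨x, hx⟩ ⟨y, hy⟩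
    simp only [comap_adj, Function.Embedding.coe_subtype]
    exact ⟨fun h => Adj.of_addEdge h (ne_of_mem_of_not_mem hy hu) (ne_of_mem_of_not_mem hy hv),
      fun h => addEdge_adj.2 (.inl h)⟩
  refine ⟨fun z => ?_, hind ▸ hD.2⟩
  rcases hD.1 z with hz | ⟨w, hw, hwz⟩
  · exact .inl hz
  · exact .inr ⟨w, hw, hwz.symm.of_addEdge (ne_of_mem_of_not_mem hw hu)
      (ne_of_mem_of_not_mem hw hv) |>.symm⟩

theorem adj_of_connected_induce_of_card_le_two {D : Finset V}
    (hD : (G.induce (↑D : Set V)).Connected) (hcard : D.card ≤ 2) (hx : x ∈ D) (hy : y ∈ D)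
    (hxy : x ≠ y) : G.Adj x y := by
  classical
  have hDxy : D = {x, y} := (eq_of_subset_of_card_le
    (insert_subset hx (singleton_subset_iff.2 hy)) (by rwa [card_pair hxy])).symm
  have : Nontrivial (↑D : Set V) := ⟨⟨⟨x, hx⟩, ⟨y, hy⟩, by simpa using hxy⟩⟩
  obtain ⟨⟨w, hw⟩, hxw⟩ := hD.preconnected.exists_adj_of_nontrivial ⟨x, hx⟩
  rw [comap_adj] at hxw
  rw [mem_coe, hDxy, mem_insert, mem_singleton] at hw
  rcases hw with rfl | rfl
  · exact (G.irrefl hxw).elim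
  · exact hxw

theorem IsCritical3.two_lt_cdn [Fintype V] (hG : G.IsCritical3) : 2 < G.cdn := by
  rw [hG.2.1]
  norm_num

theorem IsCritical3.exists_isCDS_addEdge [Fintype V] (hG : G.IsCritical3) (huv : u ≠ v)
    (hnadj : ¬G.Adj u v) : ∃ D : Finset V, D.card ≤ 2 ∧ (G.addEdge u v).IsCDS ↑D := by
  have hconn : (G.addEdge u v).Connected := hG.1.mono le_sup_left
  obtain ⟨D, hcard, hD⟩ := Nat.sInf_mem (s := {n | ∃ D : Finset V, D.card = n ∧
    (G.addEdge u v).IsCDS ↑D}) ⟨_, univ, rfl, isCDS_univ hconn⟩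
  have hlt := hG.2.2 u v huv hnadj
  exact ⟨D, by rw [cdn] at hlt; omega, hD⟩

theorem eq_or_eq_or_reachableAvoiding_of_addEdge_adj (hu : u ≠ a) (huv : u ≠ v)
    (h : (G.addEdge u v).Adj u z) : z = a ∨ z = v ∨ G.ReachableAvoiding a z u := by
  rcases addEdge_adj.1 h with h | ⟨h, -⟩
  · by_cases hza : z = a
    · exact .inl hza
    · exact .inr (.inr (h.reachableAvoiding hu hza).symm)
  · rcases Sym2.eq_iff.1 h with ⟨-, hzv⟩ | ⟨huv', -⟩
    · exact .inr (.inl hzv)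
    · exact absurd huv' huv

/-- A vertex of a component of `G - a` avoiding `u` and `v` can only be dominated by `a`. -/
theorem mem_of_isCDS_addEdge (hu : u ≠ a) (hv : v ≠ a) (huv : u ≠ v)
    (hW : G.MissesComponent a u v) {D : Finset V} (hD : (G.addEdge u v).IsCDS ↑D)
    (hcard : D.card ≤ 2) (huD : u ∈ D) : a ∈ D := by
  obtain ⟨t, hta, htu, htv⟩ := hW
  have hcomp : ∀ z ∈ D, z = a ∨ z = v ∨ G.ReachableAvoiding a z u := by
    intro z hz
    by_cases hzu : z = u
    · subst hzu
      exact .inr (.inr (.refl hu))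
    · exact eq_or_eq_or_reachableAvoiding_of_addEdge_adj hu huv
        (adj_of_connected_induce_of_card_le_two hD.2 hcard huD hz (Ne.symm hzu))
  rcases hD.1 t with htD | ⟨z, hz, hzt⟩
  · rcases hcomp t htD with h | h | h
    · exact absurd h hta
    · exact absurd h (ne_of_not_reachableAvoiding hta htv)
    · exact absurd h htu
  · have hGzt : G.Adj z t :=
      hzt.of_addEdge (ne_of_not_reachableAvoiding hta htu) (ne_of_not_reachableAvoiding hta htv)
    rcases hcomp z hz with rfl | rfl | h
    · exact hz
    · exact absurd (hGzt.reachableAvoiding hv hta).symm htv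
    · exact absurd ((hGzt.reachableAvoiding h.ne_left hta).symm.trans h) htu

theorem dominates_of_mem_isCDS_addEdge [Fintype V] (hcdn : 2 < G.cdn) (hu : u ≠ a) (hv : v ≠ a)
    (huv : u ≠ v) (hW : G.MissesComponent a u v) {D : Finset V} (hD : (G.addEdge u v).IsCDS ↑D)
    (hcard : D.card ≤ 2) (huD : u ∈ D) :
    G.Adj a u ∧ ¬G.Adj a v ∧ ∀ x, x ≠ u → x ≠ v → x ≠ a → G.Adj u x ∨ G.Adj a x := by
  classical
  have haD := mem_of_isCDS_addEdge hu hv huv hW hD hcard huD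
  have hDeq : D = {u, a} := (eq_of_subset_of_card_le
    (insert_subset huD (singleton_subset_iff.2 haD)) (by rwa [card_pair hu])).symm
  have hua : (G.addEdge u v).Adj u a := adj_of_connected_induce_of_card_le_two hD.2 hcard huD haD hu
  have hau : G.Adj a u := (hua.of_addEdge hu.symm hv.symm).symm
  have hdom : ∀ x, x ≠ u → x ≠ v → x ≠ a → G.Adj u x ∨ G.Adj a x := by
    intro x hxu hxv hxa
    rcases hD.1 x with hx | ⟨z, hz, hzx⟩
    · simp [hDeq, hxu, hxa] at hx
    · simp only [hDeq, coe_pair, Set.mem_insert_iff, Set.mem_singleton_iff] at hz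
      rcases hz with rfl | rfl
      · exact .inl (hzx.of_addEdge hxu hxv)
      · exact .inr (hzx.of_addEdge hxu hxv)
  refine ⟨hau, fun hav => ?_, hdom⟩
  obtain ⟨z, hzu, hza, hnu, hna⟩ := exists_not_adj_of_two_lt_cdn hcdn hau.symm
  by_cases hzv : z = v
  · exact hna (hzv ▸ hav)
  · rcases hdom z hzu hzv hza with h | h <;> contradiction

theorem IsCritical3.cut_pair [Fintype V] (hG : G.IsCritical3) (hu : u ≠ a) (hv : v ≠ a)
    (huv : u ≠ v) (hnadj : ¬G.Adj u v) (hW : G.MissesComponent a u v) :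
    (G.Adj a u ∧ ¬G.Adj a v ∧ ∀ x, x ≠ u → x ≠ v → x ≠ a → G.Adj u x ∨ G.Adj a x) ∨
      (G.Adj a v ∧ ¬G.Adj a u ∧ ∀ x, x ≠ v → x ≠ u → x ≠ a → G.Adj v x ∨ G.Adj a x) := by
  obtain ⟨D, hcard, hD⟩ := hG.exists_isCDS_addEdge huv hnadj
  by_cases huD : u ∈ D
  · exact .inl (dominates_of_mem_isCDS_addEdge hG.two_lt_cdn hu hv huv hW hD hcard huD)
  by_cases hvD : v ∈ D
  · exact .inr (dominates_of_mem_isCDS_addEdge hG.two_lt_cdn hv hu huv.symm hW.symm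
      (addEdge_comm ▸ hD) hcard hvD)
  · have := cdn_le_card (hD.of_addEdge huD hvD)
    have := hG.two_lt_cdn
    omega

theorem IsCritical3.adj_iff_not_adj [Fintype V] (hG : G.IsCritical3) (hu : u ≠ a) (hv : v ≠ a)
    (huv : u ≠ v) (hnadj : ¬G.Adj u v) (hW : G.MissesComponent a u v) :
    G.Adj a u ↔ ¬G.Adj a v := by
  rcases hG.cut_pair hu hv huv hnadj hW with ⟨h, h', -⟩ | ⟨h, h', -⟩ <;> tauto

theorem IsCritical3.adj_of_not_adj_of_not_adj [Fintype V] (hG : G.IsCritical3) (hu : u ≠ a)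
    (hv : v ≠ a) (huv : u ≠ v) (hnadj : ¬G.Adj u v) (hW : G.MissesComponent a u v) (hxu : x ≠ u)
    (hxv : x ≠ v) (hxa : x ≠ a) (hux : ¬G.Adj u x) (hvx : ¬G.Adj v x) : G.Adj a x := by
  rcases hG.cut_pair hu hv huv hnadj hW with ⟨-, -, h⟩ | ⟨-, -, h⟩
  · exact (h x hxu hxv hxa).resolve_left hux
  · exact (h x hxv hxu hxa).resolve_left hvx

theorem exists_isIndepSet'_card_three_of_not_adj (hxy : x ≠ y) (hxz : x ≠ z) (hyz : y ≠ z)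
    (nxy : ¬G.Adj x y) (nxz : ¬G.Adj x z) (nyz : ¬G.Adj y z) :
    ∃ s : Finset V, G.IsIndepSet' ↑s ∧ s.card = 3 := by
  classical
  refine ⟨{x, y, z}, ?_, card_eq_three.2 ⟨x, y, z, hxy, hxz, hyz, rfl⟩⟩
  simp [IsIndepSet', Set.pairwise_insert, adj_comm, *]

theorem indepNum'_eq_of_forall_card_le [Fintype V] {n : ℕ}
    (h : ∃ s : Finset V, G.IsIndepSet' ↑s ∧ s.card = n)
    (h' : ∀ s : Finset V, G.IsIndepSet' ↑s → s.card ≤ n) : G.indepNum' = n :=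
  IsGreatest.csSup_eq ⟨h, by rintro _ ⟨s, hs, rfl⟩; exact h' s hs⟩

/-- The edge `wa`, for a neighbour `w` of `a` in the component of `q`, cannot dominate `G`; a vertex
`z` it misses yields the independent triple `{z, w, p}` or `{p, q, z}`. -/
theorem exists_isIndepSet'_card_three_of_forall_adj [Fintype V] (hconn : G.Connected)
    (hcdn : 2 < G.cdn) {p q : V} (hp : p ≠ a) (hq : q ≠ a) (hpq : ¬G.ReachableAvoiding a p q)
    (hpa : ∀ x, G.ReachableAvoiding a x p → G.Adj a x) :
    ∃ s : Finset V, G.IsIndepSet' ↑s ∧ s.card = 3 := by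
  obtain ⟨w, hwa, hqw⟩ := exists_adj_reachableAvoiding (hconn.preconnected q a).some hq
  obtain ⟨z, hzw, hza, hwz, haz⟩ := exists_not_adj_of_two_lt_cdn hcdn hwa
  have hzp : ¬G.ReachableAvoiding a z p := fun h => haz (hpa z h)
  by_cases hzq : G.ReachableAvoiding a z q
  · have hwp : ¬G.ReachableAvoiding a w p := fun h => hpq (hqw.trans h).symm
    exact exists_isIndepSet'_card_three_of_not_adj hzw (ne_of_not_reachableAvoiding hza hzp)
      (ne_of_not_reachableAvoiding hwa.ne hwp) (fun h => hwz h.symm)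
      (not_adj_of_not_reachableAvoiding hza hp hzp)
      (not_adj_of_not_reachableAvoiding hwa.ne hp hwp)
  · have hpz : ¬G.ReachableAvoiding a p z := fun h => hzp h.symm
    have hqz : ¬G.ReachableAvoiding a q z := fun h => hzq h.symm
    exact exists_isIndepSet'_card_three_of_not_adj (ne_of_not_reachableAvoiding hp hpq)
      (ne_of_not_reachableAvoiding hp hpz) (ne_of_not_reachableAvoiding hq hqz)
      (not_adj_of_not_reachableAvoiding hp hq hpq) (not_adj_of_not_reachableAvoiding hp hza hpz)
      (not_adj_of_not_reachableAvoiding hq hza hqz)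

theorem IsCritical3.exists_isIndepSet'_card_three [Fintype V] (hG : G.IsCritical3) (hu : u ≠ a)
    (hv : v ≠ a) (huv : ¬G.ReachableAvoiding a u v) :
    ∃ s : Finset V, G.IsIndepSet' ↑s ∧ s.card = 3 := by
  by_cases hU : ∀ x, G.ReachableAvoiding a x u → G.Adj a x
  · exact exists_isIndepSet'_card_three_of_forall_adj hG.1 hG.two_lt_cdn hu hv huv hU
  by_cases hV : ∀ x, G.ReachableAvoiding a x v → G.Adj a x
  · exact exists_isIndepSet'_card_three_of_forall_adj hG.1 hG.two_lt_cdn hv hu (fun h => huv h.symm)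
      hV
  simp only [not_forall, exists_prop] at hU hV
  obtain ⟨x, hxu, hax⟩ := hU
  obtain ⟨y, hyv, hay⟩ := hV
  have hxy : ¬G.ReachableAvoiding a x y := fun h => huv (hxu.symm.trans (h.trans hyv))
  exact exists_isIndepSet'_card_three_of_not_adj hxu.ne_left
    (ne_of_not_reachableAvoiding hxu.ne_left hxy) hyv.ne_left.symm (fun h => hax h.symm)
    (not_adj_of_not_reachableAvoiding hxu.ne_left hyv.ne_left hxy) hay

theorem missesComponent_of_three
    (hsep : ∀ x y, G.ReachableAvoiding a x y → G.MissesComponent a x y) (hz : z ≠ a) :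
    G.MissesComponent a x y ∨ G.MissesComponent a x z ∨ G.MissesComponent a y z := by
  by_cases hxy : G.ReachableAvoiding a x y
  · exact .inl (hsep _ _ hxy)
  by_cases hxz : G.ReachableAvoiding a x z
  · exact .inr (.inl (hsep _ _ hxz))
  by_cases hyz : G.ReachableAvoiding a y z
  · exact .inr (.inr (hsep _ _ hyz))
  exact .inl ⟨z, hz, fun h => hxz h.symm, fun h => hyz h.symm⟩

section Indep

variable [Fintype V] {s : Finset V}

theorem IsCritical3.not_missesComponent_of_mem (hG : G.IsCritical3) (hs : G.IsIndepSet' ↑s)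
    (has : a ∈ s) (hu : u ∈ s) (hv : v ∈ s) (hua : u ≠ a) (hva : v ≠ a) (huv : u ≠ v) :
    ¬G.MissesComponent a u v := fun hW =>
  hs has hu hua.symm ((hG.adj_iff_not_adj hua hva huv (hs hu hv huv) hW).2 (hs has hv hva.symm))

theorem IsCritical3.false_of_triangle (hG : G.IsCritical3) (hs : G.IsIndepSet' ↑s) (has : a ∉ s)
    (hx : x ∈ s) (hy : y ∈ s) (hz : z ∈ s) (hxy : x ≠ y) (hxz : x ≠ z) (hyz : y ≠ z)
    (hWxy : G.MissesComponent a x y) (hWxz : G.MissesComponent a x z)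
    (hWyz : G.MissesComponent a y z) : False := by
  have hxa := ne_of_mem_of_not_mem hx has
  have hya := ne_of_mem_of_not_mem hy has
  have hza := ne_of_mem_of_not_mem hz has
  have := hG.adj_iff_not_adj hxa hya hxy (hs hx hy hxy) hWxy
  have := hG.adj_iff_not_adj hxa hza hxz (hs hx hz hxz) hWxz
  have := hG.adj_iff_not_adj hya hza hyz (hs hy hz hyz) hWyz
  tauto

theorem IsCritical3.false_of_two_pairs (hG : G.IsCritical3) (hs : G.IsIndepSet' ↑s)
    (has : a ∉ s) (hx : x ∈ s) (hy : y ∈ s) (hz : z ∈ s) (hw : w ∈ s) (hxy : x ≠ y) (hxz : x ≠ z)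
    (hxw : x ≠ w) (hyz : y ≠ z) (hyw : y ≠ w) (hzw : z ≠ w) (hWxy : G.MissesComponent a x y)
    (hWzw : G.MissesComponent a z w) : False := by
  have hxa := ne_of_mem_of_not_mem hx has
  have hya := ne_of_mem_of_not_mem hy has
  have hza := ne_of_mem_of_not_mem hz has
  have hwa := ne_of_mem_of_not_mem hw has
  have haz := hG.adj_of_not_adj_of_not_adj hxa hya hxy (hs hx hy hxy) hWxy hxz.symm hyz.symm hza
    (hs hx hz hxz) (hs hy hz hyz)
  have haw := hG.adj_of_not_adj_of_not_adj hxa hya hxy (hs hx hy hxy) hWxy hxw.symm hyw.symm hwa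
    (hs hx hw hxw) (hs hy hw hyw)
  exact (hG.adj_iff_not_adj hza hwa hzw (hs hz hw hzw) hWzw).1 haz haw

theorem IsCritical3.false_of_reachableAvoiding (hG : G.IsCritical3)
    (hsep : ∀ x y, G.ReachableAvoiding a x y → G.MissesComponent a x y) (hs : G.IsIndepSet' ↑s)
    (has : a ∉ s) (hx : x ∈ s) (hy : y ∈ s) (hz : z ∈ s) (hw : w ∈ s) (hxy : x ≠ y) (hxz : x ≠ z)
    (hxw : x ≠ w) (hyz : y ≠ z) (hyw : y ≠ w) (hzw : z ≠ w) (hR : G.ReachableAvoiding a x y) :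
    False := by
  by_cases hRzw : G.ReachableAvoiding a z w
  · exact hG.false_of_two_pairs hs has hx hy hz hw hxy hxz hxw hyz hyw hzw (hsep _ _ hR)
      (hsep _ _ hRzw)
  by_cases hRxz : G.ReachableAvoiding a x z
  · exact hG.false_of_triangle hs has hx hy hz hxy hxz hyz (hsep _ _ hR) (hsep _ _ hRxz)
      (hsep _ _ (hR.symm.trans hRxz))
  by_cases hRxw : G.ReachableAvoiding a x w
  · exact hG.false_of_triangle hs has hx hy hw hxy hxw hyw (hsep _ _ hR) (hsep _ _ hRxw)
      (hsep _ _ (hR.symm.trans hRxw))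
  · exact hG.false_of_triangle hs has hx hz hw hxz hxw hzw
      ⟨w, ne_of_mem_of_not_mem hw has, fun h => hRxw h.symm, fun h => hRzw h.symm⟩
      ⟨z, ne_of_mem_of_not_mem hz has, fun h => hRxz h.symm, hRzw⟩
      ⟨x, ne_of_mem_of_not_mem hx has, hRxz, hRxw⟩

theorem IsCritical3.card_le_three (hG : G.IsCritical3)
    (hsep : ∀ x y, G.ReachableAvoiding a x y → G.MissesComponent a x y) (hs : G.IsIndepSet' ↑s) :
    s.card ≤ 3 := by
  classical
  by_contra! h
  by_cases has : a ∈ s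
  · obtain ⟨x, hx, y, hy, z, hz, hxy, hxz, hyz⟩ :=
      two_lt_card.1 (show 2 < (s.erase a).card by rw [card_erase_of_mem has]; omega)
    obtain ⟨hxa, hx⟩ := mem_erase.1 hx
    obtain ⟨hya, hy⟩ := mem_erase.1 hy
    obtain ⟨hza, hz⟩ := mem_erase.1 hz
    rcases missesComponent_of_three hsep hza with hW | hW | hW
    · exact hG.not_missesComponent_of_mem hs has hx hy hxa hya hxy hW
    · exact hG.not_missesComponent_of_mem hs has hx hz hxa hza hxz hW
    · exact hG.not_missesComponent_of_mem hs has hy hz hya hza hyz hW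
  obtain ⟨x, hx, y, hy, z, hz, w, hw, hxy, hxz, hxw, hyz, hyw, hzw⟩ := three_lt_card.1 h
  by_cases hRxy : G.ReachableAvoiding a x y
  · exact hG.false_of_reachableAvoiding hsep hs has hx hy hz hw hxy hxz hxw hyz hyw hzw hRxy
  by_cases hRxz : G.ReachableAvoiding a x z
  · exact hG.false_of_reachableAvoiding hsep hs has hx hz hy hw hxz hxy hxw hyz.symm hzw hyw hRxz
  by_cases hRyz : G.ReachableAvoiding a y z
  · exact hG.false_of_reachableAvoiding hsep hs has hy hz hx hw hyz hxy.symm hyw hxz.symm hzw hxw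
      hRyz
  · exact hG.false_of_triangle hs has hx hy hz hxy hxz hyz
      ⟨z, ne_of_mem_of_not_mem hz has, fun h => hRxz h.symm, fun h => hRyz h.symm⟩
      ⟨y, ne_of_mem_of_not_mem hy has, fun h => hRxy h.symm, hRyz⟩
      ⟨x, ne_of_mem_of_not_mem hx has, hRxy, hRxz⟩

end Indep

end SimpleGraph

theorem stmt_17 {V : Type*} [Fintype V] (G : SimpleGraph V)
    (hG : G.IsCritical3) (a : V) (ha : G.IsVertexCut {a}) :
    G.indepNum' = G.conn + 2 := by
  have hcard : 3 ≤ Fintype.card V := hG.2.1 ▸ cdn_le_card (isCDS_univ hG.1)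
  obtain ⟨b, hb⟩ := Fintype.exists_ne_of_one_lt_card (by omega) a
  obtain ⟨u, v, hu, hv, huv⟩ := exists_not_reachableAvoiding ha hb
  rw [conn_eq_one_of_isVertexCut hG.1 ha, indepNum'_eq_of_forall_card_le
    (hG.exists_isIndepSet'_card_three hu hv huv)
    fun s hs => hG.card_le_three (fun _ _ => ReachableAvoiding.missesComponent hu hv huv) hs]
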